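/- Given the shift data and operational data of a fully polarized LG-algebra, each of the induced operations on P ⊕ N is compatible with the relation ≤π: ⊗' and ⊕' are monotone in both coordinates; \' and ⦸' are antitone in the first coordinate and monotone in the second; /' and ⊘' are monotone in the first coordinate and antitone in the second (monotone meaning A ≤π A' implies F(A, B) ≤π F(A', B), antitone meaning A ≤π A' implies F(A', B) ≤π F(A, B), and similarly in the second coordinate). -/

import Mathlib

/-- A weakening relation from an ordered set `(α, leA)` to an ordered set `(β, leB)`. -/
def IsWeakeningBetween {α β : Type*} (leA : α → α → Prop) (leB : β → β → Prop)
    (R : α → β → Prop) : Prop :=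
  ∀ ⦃a' a b b'⦄, leA a' a → R a b → leB b b' → R a' b'

/-- The shift data of a fully polarized LG-algebra: four posets `P`, `Ṗ` (`Pd`),
`N`, `Ṅ` (`Nd`), adjoint pairs of monotone shift maps `↑ ⊣ ⫞` and `↿ ⊣ ↓`, and
three weakening relations `⪌ʳ` (`gtr : P → Ṗ`), `⪯` (`prec : P → N`) and
`⪅ᵇ` (`lesb : Ṅ → N`) with `↑p ⪅ᵇ n ↔ p ⪯ n ↔ p ⪌ʳ ↓n`. -/
structure ShiftData (P Pd N Nd : Type*) [PartialOrder P] [PartialOrder Pd]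
    [PartialOrder N] [PartialOrder Nd] where
  /-- `↑ : P → Ṅ` -/
  up : P → Nd
  /-- `⫞ : Ṅ → P` -/
  corner : Nd → P
  /-- `↿ : Ṗ → N` -/
  upl : Pd → N
  /-- `↓ : N → Ṗ` -/
  down : N → Pd
  up_mono : Monotone up
  corner_mono : Monotone corner
  upl_mono : Monotone upl
  down_mono : Monotone down
  /-- the adjunction `↑ ⊣ ⫞` -/
  up_adj : ∀ (p : P) (nd : Nd), up p ≤ nd ↔ p ≤ corner nd
  /-- the adjunction `↿ ⊣ ↓` -/
  upl_adj : ∀ (pd : Pd) (n : N), upl pd ≤ n ↔ pd ≤ down n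
  /-- `⪌ʳ : P → Ṗ` -/
  gtr : P → Pd → Prop
  /-- `⪯ : P → N` -/
  prec : P → N → Prop
  /-- `⪅ᵇ : Ṅ → N` -/
  lesb : Nd → N → Prop
  gtr_wk : IsWeakeningBetween (· ≤ ·) (· ≤ ·) gtr
  prec_wk : IsWeakeningBetween (· ≤ ·) (· ≤ ·) prec
  lesb_wk : IsWeakeningBetween (· ≤ ·) (· ≤ ·) lesb
  /-- `↑p ⪅ᵇ n ↔ p ⪯ n` -/
  lesb_up_iff_prec : ∀ (p : P) (n : N), lesb (up p) n ↔ prec p n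
  /-- `p ⪯ n ↔ p ⪌ʳ ↓n` -/
  prec_iff_gtr_down : ∀ (p : P) (n : N), prec p n ↔ gtr p (down n)

variable {P Pd N Nd : Type*} [PartialOrder P] [PartialOrder Pd]
  [PartialOrder N] [PartialOrder Nd]

/-- The represented relation `⪌ : P → Ṅ`, `p ⪌ ṅ ↔ ↑p ⩿_Ṅ ṅ`. -/
def ShiftData.gles (S : ShiftData P Pd N Nd) (p : P) (nd : Nd) : Prop := S.up p ≤ nd

/-- The represented relation `⪷ : Ṗ → N`, `ṗ ⪷ n ↔ ṗ ⩿_Ṗ ↓n`. -/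
def ShiftData.pres (S : ShiftData P Pd N Nd) (pd : Pd) (n : N) : Prop := pd ≤ S.down n

/-- The relation `⸧ : P̊ → N̊` with `P̊ = P ⊕ Ṗ` and `N̊ = N ⊕ Ṅ`, defined by cases
from `⪯`, `⪌` and `⪷` (and never holding between two shifted elements). -/
def ShiftData.tack (S : ShiftData P Pd N Nd) : P ⊕ Pd → N ⊕ Nd → Prop
  | Sum.inl p, Sum.inl n => S.prec p n
  | Sum.inl p, Sum.inr nd => S.gles p nd
  | Sum.inr pd, Sum.inl n => S.pres pd n
  | Sum.inr _, Sum.inr _ => False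

/-- The relation `≤π` on `P ⊕ N`: `p ≤π q ↔ p ⪌ ↑q`, `p ≤π n ↔ p ⪯ n`,
`m ≤π n ↔ ↓m ⪷ n`, and no element of `N` is below an element of `P`. -/
def ShiftData.lepi (S : ShiftData P Pd N Nd) : P ⊕ N → P ⊕ N → Prop
  | Sum.inl p, Sum.inl q => S.gles p (S.up q)
  | Sum.inl p, Sum.inr n => S.prec p n
  | Sum.inr m, Sum.inr n => S.pres (S.down m) n
  | Sum.inr _, Sum.inl _ => False

/-- A fully polarized LG-algebra: shift data together with the six heterogeneous
operations `⊗, \, /, ⊕, ⊘, ⦸` satisfying the residuation laws w.r.t. `⸧`. -/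
structure FPLG (P Pd N Nd : Type*) [PartialOrder P] [PartialOrder Pd]
    [PartialOrder N] [PartialOrder Nd] extends ShiftData P Pd N Nd where
  /-- `⊗ : P̊ × P̊ → P` -/
  tens : P ⊕ Pd → P ⊕ Pd → P
  /-- `\ : P̊ × N̊ → N` -/
  lres : P ⊕ Pd → N ⊕ Nd → N
  /-- `/ : N̊ × P̊ → N` -/
  rres : N ⊕ Nd → P ⊕ Pd → N
  /-- `⊕ : N̊ × N̊ → N` -/
  coten : N ⊕ Nd → N ⊕ Nd → N
  /-- `⊘ : P̊ × N̊ → P` -/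
  lsub : P ⊕ Pd → N ⊕ Nd → P
  /-- `⦸ : N̊ × P̊ → P` -/
  rsub : N ⊕ Nd → P ⊕ Pd → P
  /-- `y ⸧ x \ z ↔ x ⊗ y ⸧ z` -/
  resid_left : ∀ (x y : P ⊕ Pd) (z : N ⊕ Nd),
    toShiftData.tack y (Sum.inl (lres x z)) ↔ toShiftData.tack (Sum.inl (tens x y)) z
  /-- `x ⊗ y ⸧ z ↔ x ⸧ z / y` -/
  resid_right : ∀ (x y : P ⊕ Pd) (z : N ⊕ Nd),
    toShiftData.tack (Sum.inl (tens x y)) z ↔ toShiftData.tack x (Sum.inl (rres z y))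
  /-- `x ⊘ w ⸧ z ↔ x ⸧ z ⊕ w` -/
  coresid_left : ∀ (x : P ⊕ Pd) (z w : N ⊕ Nd),
    toShiftData.tack (Sum.inl (lsub x w)) z ↔ toShiftData.tack x (Sum.inl (coten z w))
  /-- `x ⸧ z ⊕ w ↔ z ⦸ x ⸧ w` -/
  coresid_right : ∀ (x : P ⊕ Pd) (z w : N ⊕ Nd),
    toShiftData.tack x (Sum.inl (coten z w)) ↔ toShiftData.tack (Sum.inl (rsub z x)) w

/-- `A⁺ ∈ P̊`: the positive representative of `A ∈ P ⊕ N`. -/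
def FPLG.pos (F : FPLG P Pd N Nd) : P ⊕ N → P ⊕ Pd
  | Sum.inl p => Sum.inl p
  | Sum.inr n => Sum.inr (F.down n)

/-- `A⁻ ∈ N̊`: the negative representative of `A ∈ P ⊕ N`. -/
def FPLG.neg (F : FPLG P Pd N Nd) : P ⊕ N → N ⊕ Nd
  | Sum.inl p => Sum.inr (F.up p)
  | Sum.inr n => Sum.inl n

/-- The induced operation `A ⊗' B = A⁺ ⊗ B⁺` on `P ⊕ N`. -/
def FPLG.tens' (F : FPLG P Pd N Nd) (A B : P ⊕ N) : P ⊕ N :=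
  Sum.inl (F.tens (F.pos A) (F.pos B))

/-- The induced operation `A \' B = A⁺ \ B⁻` on `P ⊕ N`. -/
def FPLG.lres' (F : FPLG P Pd N Nd) (A B : P ⊕ N) : P ⊕ N :=
  Sum.inr (F.lres (F.pos A) (F.neg B))

/-- The induced operation `A /' B = A⁻ / B⁺` on `P ⊕ N`. -/
def FPLG.rres' (F : FPLG P Pd N Nd) (A B : P ⊕ N) : P ⊕ N :=
  Sum.inr (F.rres (F.neg A) (F.pos B))

/-- The induced operation `A ⊕' B = A⁻ ⊕ B⁻` on `P ⊕ N`. -/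
def FPLG.coten' (F : FPLG P Pd N Nd) (A B : P ⊕ N) : P ⊕ N :=
  Sum.inr (F.coten (F.neg A) (F.neg B))

/-- The induced operation `A ⊘' B = A⁺ ⊘ B⁻` on `P ⊕ N`. -/
def FPLG.lsub' (F : FPLG P Pd N Nd) (A B : P ⊕ N) : P ⊕ N :=
  Sum.inl (F.lsub (F.pos A) (F.neg B))

/-- The induced operation `A ⦸' B = A⁻ ⦸ B⁺` on `P ⊕ N`. -/
def FPLG.rsub' (F : FPLG P Pd N Nd) (A B : P ⊕ N) : P ⊕ N :=
  Sum.inl (F.rsub (F.neg A) (F.pos B))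

/-! Writing `A⁺ ∈ P̊` and `A⁻ ∈ N̊` for the two representatives of `A ∈ P ⊕ N`, the relation
`A ≤π B` is exactly `A⁺ ⸧ B⁻`. Using the weakening and adjunction axioms, `≤π` is then
characterized by `⸧` alone: `A ≤π B` iff every `z` with `B⁺ ⸧ z` has `A⁺ ⸧ z`, iff every `x`
with `x ⸧ A⁻` has `x ⸧ B⁻`. Each monotonicity law then reduces, through one or two
residuation laws, to one of these two characterizations applied to the argument that varies. -/

namespace ShiftData

variable (S : ShiftData P Pd N Nd) {p q : P} {m n : N}

theorem prec_of_up_le (hpq : S.up p ≤ S.up q) (h : S.prec q n) : S.prec p n :=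
  (S.lesb_up_iff_prec p n).1 (S.lesb_wk hpq ((S.lesb_up_iff_prec q n).2 h) le_rfl)

theorem prec_of_down_le (hmn : S.down m ≤ S.down n) (h : S.prec p m) : S.prec p n :=
  (S.prec_iff_gtr_down p n).2 (S.gtr_wk le_rfl ((S.prec_iff_gtr_down p m).1 h) hmn)

end ShiftData

namespace FPLG

variable (F : FPLG P Pd N Nd) {A A' B B' : P ⊕ N}

theorem lepi_iff_tack_pos_neg : F.lepi A B ↔ F.tack (F.pos A) (F.neg B) := by
  cases A <;> cases B <;> rfl

theorem lepi_refl (A : P ⊕ N) : F.lepi A A := by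
  cases A <;> exact le_rfl

theorem lepi_iff_forall_tack_pos :
    F.lepi A B ↔ ∀ z, F.tack (F.pos B) z → F.tack (F.pos A) z := by
  refine ⟨fun hAB z hBz => ?_, fun h =>
    F.lepi_iff_tack_pos_neg.2 (h _ (F.lepi_iff_tack_pos_neg.1 (F.lepi_refl B)))⟩
  cases A <;> cases B <;> cases z
  · exact F.prec_of_up_le hAB hBz
  · exact le_trans hAB hBz
  · exact F.prec_of_down_le hBz hAB
  · exact hBz.elim
  · exact hAB.elim
  · exact hAB.elim
  · exact le_trans hAB hBz
  · exact hBz.elim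

theorem lepi_iff_forall_tack_neg :
    F.lepi A B ↔ ∀ x, F.tack x (F.neg A) → F.tack x (F.neg B) := by
  refine ⟨fun hAB x hxA => ?_, fun h =>
    F.lepi_iff_tack_pos_neg.2 (h _ (F.lepi_iff_tack_pos_neg.1 (F.lepi_refl A)))⟩
  cases A <;> cases B <;> cases x
  · exact le_trans hxA hAB
  · exact hxA.elim
  · exact F.prec_of_up_le hxA hAB
  · exact hxA.elim
  · exact hAB.elim
  · exact hAB.elim
  · exact F.prec_of_down_le hAB hxA
  · exact le_trans hxA hAB

variable {F}

theorem tens'_mono_left (h : F.lepi A A') : F.lepi (F.tens' A B) (F.tens' A' B) :=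
  F.lepi_iff_forall_tack_pos.2 fun z hz =>
    (F.resid_right _ _ z).2 (F.lepi_iff_forall_tack_pos.1 h _ ((F.resid_right _ _ z).1 hz))

theorem tens'_mono_right (h : F.lepi B B') : F.lepi (F.tens' A B) (F.tens' A B') :=
  F.lepi_iff_forall_tack_pos.2 fun z hz =>
    (F.resid_left _ _ z).1 (F.lepi_iff_forall_tack_pos.1 h _ ((F.resid_left _ _ z).2 hz))

theorem coten'_mono_left (h : F.lepi A A') : F.lepi (F.coten' A B) (F.coten' A' B) :=
  F.lepi_iff_forall_tack_neg.2 fun x hx =>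
    (F.coresid_left x _ _).1 (F.lepi_iff_forall_tack_neg.1 h _ ((F.coresid_left x _ _).2 hx))

theorem coten'_mono_right (h : F.lepi B B') : F.lepi (F.coten' A B) (F.coten' A B') :=
  F.lepi_iff_forall_tack_neg.2 fun x hx =>
    (F.coresid_right x _ _).2 (F.lepi_iff_forall_tack_neg.1 h _ ((F.coresid_right x _ _).1 hx))

theorem lres'_anti_left (h : F.lepi A A') : F.lepi (F.lres' A' B) (F.lres' A B) :=
  F.lepi_iff_forall_tack_neg.2 fun x hx =>
    (F.resid_left _ x _).2 <| (F.resid_right _ x _).2 <|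
      F.lepi_iff_forall_tack_pos.1 h _ <| (F.resid_right _ x _).1 <| (F.resid_left _ x _).1 hx

theorem lres'_mono_right (h : F.lepi B B') : F.lepi (F.lres' A B) (F.lres' A B') :=
  F.lepi_iff_forall_tack_neg.2 fun x hx =>
    (F.resid_left _ x _).2 (F.lepi_iff_forall_tack_neg.1 h _ ((F.resid_left _ x _).1 hx))

theorem rsub'_anti_left (h : F.lepi A A') : F.lepi (F.rsub' A' B) (F.rsub' A B) :=
  F.lepi_iff_forall_tack_pos.2 fun z hz =>
    (F.coresid_right _ _ z).1 <| (F.coresid_left _ _ z).1 <|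
      F.lepi_iff_forall_tack_neg.1 h _ <| (F.coresid_left _ _ z).2 <| (F.coresid_right _ _ z).2 hz

theorem rsub'_mono_right (h : F.lepi B B') : F.lepi (F.rsub' A B) (F.rsub' A B') :=
  F.lepi_iff_forall_tack_pos.2 fun z hz =>
    (F.coresid_right _ _ z).1 (F.lepi_iff_forall_tack_pos.1 h _ ((F.coresid_right _ _ z).2 hz))

theorem rres'_mono_left (h : F.lepi A A') : F.lepi (F.rres' A B) (F.rres' A' B) :=
  F.lepi_iff_forall_tack_neg.2 fun x hx =>
    (F.resid_right x _ _).1 (F.lepi_iff_forall_tack_neg.1 h _ ((F.resid_right x _ _).2 hx))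

theorem rres'_anti_right (h : F.lepi B B') : F.lepi (F.rres' A B') (F.rres' A B) :=
  F.lepi_iff_forall_tack_neg.2 fun x hx =>
    (F.resid_right x _ _).1 <| (F.resid_left x _ _).1 <|
      F.lepi_iff_forall_tack_pos.1 h _ <| (F.resid_left x _ _).2 <| (F.resid_right x _ _).2 hx

theorem lsub'_mono_left (h : F.lepi A A') : F.lepi (F.lsub' A B) (F.lsub' A' B) :=
  F.lepi_iff_forall_tack_pos.2 fun z hz =>
    (F.coresid_left _ z _).2 (F.lepi_iff_forall_tack_pos.1 h _ ((F.coresid_left _ z _).1 hz))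

theorem lsub'_anti_right (h : F.lepi B B') : F.lepi (F.lsub' A B') (F.lsub' A B) :=
  F.lepi_iff_forall_tack_pos.2 fun z hz =>
    (F.coresid_left _ z _).2 <| (F.coresid_right _ z _).2 <|
      F.lepi_iff_forall_tack_neg.1 h _ <| (F.coresid_right _ z _).1 <| (F.coresid_left _ z _).1 hz

end FPLG

/-- Each induced operation on `P ⊕ N` is compatible with `≤π`: `⊗'` and `⊕'` are
monotone in both coordinates, `\'` and `⦸'` are antitone in the first coordinate and
monotone in the second, and `/'` and `⊘'` are monotone in the first coordinate and
antitone in the second. -/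
theorem stmt9 (F : FPLG P Pd N Nd) :
    (∀ A A' B : P ⊕ N, F.toShiftData.lepi A A' →
      F.toShiftData.lepi (F.tens' A B) (F.tens' A' B)) ∧
    (∀ A B B' : P ⊕ N, F.toShiftData.lepi B B' →
      F.toShiftData.lepi (F.tens' A B) (F.tens' A B')) ∧
    (∀ A A' B : P ⊕ N, F.toShiftData.lepi A A' →
      F.toShiftData.lepi (F.coten' A B) (F.coten' A' B)) ∧
    (∀ A B B' : P ⊕ N, F.toShiftData.lepi B B' →
      F.toShiftData.lepi (F.coten' A B) (F.coten' A B')) ∧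
    (∀ A A' B : P ⊕ N, F.toShiftData.lepi A A' →
      F.toShiftData.lepi (F.lres' A' B) (F.lres' A B)) ∧
    (∀ A B B' : P ⊕ N, F.toShiftData.lepi B B' →
      F.toShiftData.lepi (F.lres' A B) (F.lres' A B')) ∧
    (∀ A A' B : P ⊕ N, F.toShiftData.lepi A A' →
      F.toShiftData.lepi (F.rsub' A' B) (F.rsub' A B)) ∧
    (∀ A B B' : P ⊕ N, F.toShiftData.lepi B B' →
      F.toShiftData.lepi (F.rsub' A B) (F.rsub' A B')) ∧
    (∀ A A' B : P ⊕ N, F.toShiftData.lepi A A' →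
      F.toShiftData.lepi (F.rres' A B) (F.rres' A' B)) ∧
    (∀ A B B' : P ⊕ N, F.toShiftData.lepi B B' →
      F.toShiftData.lepi (F.rres' A B') (F.rres' A B)) ∧
    (∀ A A' B : P ⊕ N, F.toShiftData.lepi A A' →
      F.toShiftData.lepi (F.lsub' A B) (F.lsub' A' B)) ∧
    (∀ A B B' : P ⊕ N, F.toShiftData.lepi B B' →
      F.toShiftData.lepi (F.lsub' A B') (F.lsub' A B)) :=
  ⟨fun _ _ _ => FPLG.tens'_mono_left, fun _ _ _ => FPLG.tens'_mono_right,
    fun _ _ _ => FPLG.coten'_mono_left, fun _ _ _ => FPLG.coten'_mono_right,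
    fun _ _ _ => FPLG.lres'_anti_left, fun _ _ _ => FPLG.lres'_mono_right,
    fun _ _ _ => FPLG.rsub'_anti_left, fun _ _ _ => FPLG.rsub'_mono_right,
    fun _ _ _ => FPLG.rres'_mono_left, fun _ _ _ => FPLG.rres'_anti_right,
    fun _ _ _ => FPLG.lsub'_mono_left, fun _ _ _ => FPLG.lsub'_anti_right⟩
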